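/- Let p = (p_1,…,p_k) be a signed composition of n with ξ_i the sign of p_i. For each ordered set partition (J_1,…,J_k) of [n] with |J_i| = |p_i| for all i, let w_{(J_1,…,J_k)} ∈ S_n ⊆ W_n map the block P_i order-preservingly onto J_i. Then e_p = Σ_{(J_1,…,J_k)} w_{(J_1,…,J_k)} ε_{P_1}^{ξ_1} r_{P_1} ⋯ ε_{P_k}^{ξ_k} r_{P_k}, the sum over all such ordered set partitions; that is, Vazirani's element I_p (the sum over ordered set partitions of the concatenation products I_{[J_1]}^{ξ_1} * ⋯ * I_{[J_k]}^{ξ_k}) equals e_p. -/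

import Mathlib

open scoped BigOperators

noncomputable section

namespace HypOct

/-- Permutations of ℤ; signed permutations will be the elements supported on `±[n]`
that commute with negation. -/
abbrev Perm' := Equiv.Perm ℤ

open scoped Classical in
/-- The permutation of ℤ with underlying function `f`, if `f` is (the function of)
a permutation; junk value `1` otherwise. -/
noncomputable def permOfFun (f : ℤ → ℤ) : Perm' :=
  if h : ∃ e : Perm', ⇑e = f then h.choose else 1

/-- Extend a function on the positive integers to an odd function on ℤ. -/
def oddify (f : ℤ → ℤ) : ℤ → ℤ := fun a =>
  if 0 < a then f a else if a < 0 then -(f (-a)) else 0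

/-- The `n`-th hyperoctahedral group `W_n`, realized as the subgroup of permutations `w`
of ℤ such that `w (-a) = - w a` for all `a` and `w` fixes all `a` with `|a| > n`. -/
def W (n : ℕ) : Subgroup Perm' where
  carrier := {w | (∀ a : ℤ, w (-a) = -(w a)) ∧ ∀ a : ℤ, (n : ℤ) < |a| → w a = a}
  one_mem' := ⟨fun a => rfl, fun a _ => rfl⟩
  mul_mem' := by
    rintro a b ⟨ha1, ha2⟩ ⟨hb1, hb2⟩
    refine ⟨fun x => ?_, fun x hx => ?_⟩
    · simp [Equiv.Perm.mul_apply, hb1, ha1]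
    · simp [Equiv.Perm.mul_apply, hb2 x hx, ha2 x hx]
  inv_mem' := by
    rintro a ⟨ha1, ha2⟩
    refine ⟨fun x => ?_, fun x hx => ?_⟩
    · apply a.injective
      rw [Equiv.Perm.coe_inv, Equiv.apply_symm_apply, ha1, Equiv.apply_symm_apply]
    · apply a.injective
      rw [Equiv.Perm.coe_inv, Equiv.apply_symm_apply, ha2 x hx]

open scoped Classical in
/-- The element of `W n` with underlying permutation `e`, junk value `1` if `e ∉ W n`. -/
noncomputable def toW (n : ℕ) (e : Perm') : W n :=
  if h : e ∈ W n then ⟨e, h⟩ else 1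

/-- Underlying function of the positive cycle `(u+1, u+2, …, v)` as a signed permutation. -/
def posCycleFun (u v : ℤ) : ℤ → ℤ := oddify fun a =>
  if u < a ∧ a < v then a + 1 else if a = v ∧ u < a then u + 1 else a

/-- Underlying function of the negative cycle `(u+1, u+2, …, v)⁻` as a signed permutation:
it maps `v` to `-(u+1)`. -/
def negCycleFun (u v : ℤ) : ℤ → ℤ := oddify fun a =>
  if u < a ∧ a < v then a + 1 else if a = v ∧ u < a then -(u + 1) else a

def posCycle (u v : ℤ) : Perm' := permOfFun (posCycleFun u v)

def negCycle (u v : ℤ) : Perm' := permOfFun (negCycleFun u v)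

/-- The signed permutation `w_{0,P}` negating every element of `P` (and of `-P`). -/
def negOnFun (P : Finset ℤ) : ℤ → ℤ := fun a => if a ∈ P ∨ -a ∈ P then -a else a

def negOn (P : Finset ℤ) : Perm' := permOfFun (negOnFun P)

/-- A signed composition of `n`: a list of nonzero integers whose absolute values sum to `n`. -/
def IsSignedComposition (n : ℕ) (p : List ℤ) : Prop :=
  (∀ x ∈ p, x ≠ 0) ∧ (p.map Int.natAbs).sum = n

/-- A composition of `n`: a list of positive integers summing to `n`. -/
def IsComposition (n : ℕ) (p : List ℤ) : Prop :=
  (∀ x ∈ p, 0 < x) ∧ (p.map Int.natAbs).sum = n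

/-- A signed partition of `n`: positive parts first, in nonincreasing order, followed by
the negative parts in order of nonincreasing absolute value. -/
def IsSignedPartition (n : ℕ) (l : List ℤ) : Prop :=
  IsSignedComposition n l ∧ ∃ pos neg : List ℤ, l = pos ++ neg ∧
    (∀ x ∈ pos, 0 < x) ∧ (∀ x ∈ neg, x < 0) ∧
    pos.Chain' (· ≥ ·) ∧ neg.Chain' (· ≤ ·)

/-- `p̂ i`, the sum of the absolute values of the first `i` parts of `p`. -/
def phat (p : List ℤ) (i : ℕ) : ℕ := ((p.take i).map Int.natAbs).sum

/-- The `i`-th block `P_i = {p̂_{i-1}+1, …, p̂_i}` of a signed composition (indexed from `i = 0`). -/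
def blk (p : List ℤ) (i : ℕ) : Finset ℤ :=
  Finset.Icc ((phat p i : ℤ) + 1) (phat p (i + 1))

/-- `|p| = (|p_1|, …, |p_k|)`. -/
def absList (p : List ℤ) : List ℤ := p.map (fun x => |x|)

/-- The number of positive parts of `p`. -/
def posCount (p : List ℤ) : ℕ := (p.filter (fun x => decide (0 < x))).length

/-- `p'`: negate the even parts of `p` and keep the odd parts. -/
def lamPrime (p : List ℤ) : List ℤ := p.map (fun x => if Odd x then x else -x)

/-- `←p`: the signed partition obtained by rearranging the parts of `p`. -/
def resort (p : List ℤ) : List ℤ :=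
  (List.insertionSort (· ≥ ·) (p.filter (fun x => decide (0 < x)))) ++
  (List.insertionSort (· ≤ ·) (p.filter (fun x => decide (x < 0))))

/-- The order of the stabilizer of `p` in the symmetric group `S_k` permuting its `k` parts. -/
def stabCard (p : List ℤ) : ℕ :=
  Nat.card {σ : Equiv.Perm (Fin p.length) // ∀ i, p.get (σ i) = p.get i}

/-- The Coxeter generating set `{t_1, s_1, …, s_{n-1}}` of `W n`. -/
def genSet (n : ℕ) : Set (W n) :=
  {w | (w : Perm') = negOn {1} ∨ ∃ i : ℕ, 1 ≤ i ∧ i + 1 ≤ n ∧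
    (w : Perm') = permOfFun (oddify (fun a =>
      if a = (i : ℤ) then (i : ℤ) + 1 else if a = (i : ℤ) + 1 then (i : ℤ) else a))}

/-- The Coxeter length of `w ∈ W n`. -/
def len (n : ℕ) (w : W n) : ℕ :=
  sInf {k | ∃ l : List (W n), l.length = k ∧ (∀ g ∈ l, g ∈ genSet n) ∧ l.prod = w}

/-- The signed Young subgroup `W_p ⊆ W_n` attached to a signed composition `p`. -/
def Wyoung (n : ℕ) (p : List ℤ) : Set (W n) :=
  {w | ∀ i < p.length,
    (∀ a ∈ blk p i, (w : Perm') a ∈ blk p i ∨ -((w : Perm') a) ∈ blk p i) ∧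
    (p.getD i 0 < 0 → ∀ a ∈ blk p i, (w : Perm') a ∈ blk p i)}

/-- `X_p`: the set of minimal length representatives of the left cosets of `W_p` in `W_n`. -/
def Xmin (n : ℕ) (p : List ℤ) : Set (W n) :=
  {w | ∀ v ∈ Wyoung n p, len n w ≤ len n (w * v)}

/-- `x_p = Σ_{w ∈ X_p} w ∈ ℂ W_n`. -/
def xp (n : ℕ) (p : List ℤ) : MonoidAlgebra ℂ (W n) :=
  ∑ᶠ w ∈ Xmin n p, MonoidAlgebra.single w (1 : ℂ)

/-- The copy of the symmetric group `S_P` inside `W n`: elements taking positive values on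
positive integers and fixing every positive integer not in `P`. -/
def SonP (n : ℕ) (P : Finset ℤ) : Set (W n) :=
  {w | (∀ a : ℤ, 0 < a → 0 < (w : Perm') a) ∧
    ∀ a : ℤ, 0 < a → a ∉ P → (w : Perm') a = a}

/-- The `i`-th smallest element of `P` (indexed from 0). -/
def sortedGet (P : Finset ℤ) (i : ℕ) : ℤ := (P.sort (· ≤ ·)).getD i 0

/-- The descent set of a permutation `w` of the ordered set `P = {z_0 < z_1 < ⋯}`:
positions `i` with `w z_i > w z_{i+1}`. -/
def descOnP (P : Finset ℤ) (w : Perm') : Finset ℕ :=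
  (Finset.range (P.card - 1)).filter (fun i => w (sortedGet P (i + 1)) < w (sortedGet P i))

/-- The Reutenauer idempotent `r_P ∈ ℂ S_P ⊆ ℂ W_n`. -/
def reutP (n : ℕ) (P : Finset ℤ) : MonoidAlgebra ℂ (W n) :=
  ∑ A ∈ (Finset.range (P.card - 1)).powerset,
    (((-1 : ℂ) ^ A.card) / ((A.card : ℂ) + 1)) •
      ∑ᶠ w ∈ {w ∈ SonP n P | descOnP P (w : Perm') ⊆ A}, MonoidAlgebra.single w (1 : ℂ)

/-- `ε_P^± = (1/2)(id ± w_{0,P})`; `sgn = true` for `+`, `sgn = false` for `-`. -/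
def epsP (n : ℕ) (P : Finset ℤ) (sgn : Bool) : MonoidAlgebra ℂ (W n) :=
  (1 / 2 : ℂ) • (1 + (if sgn then (1 : ℂ) else -1) • MonoidAlgebra.single (toW n (negOn P)) (1 : ℂ))

/-- `e_p = x_{|p|} ε_{P_1}^{ξ_1} r_{P_1} ⋯ ε_{P_k}^{ξ_k} r_{P_k}`. -/
def eP (n : ℕ) (p : List ℤ) : MonoidAlgebra ℂ (W n) :=
  xp n (absList p) * ((List.range p.length).map (fun i =>
    epsP n (blk p i) (decide (0 < p.getD i 0)) * reutP n (blk p i))).prod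

/-- `E_λ = (1/k!) Σ_{←p = λ} e_p`, the sum being over the signed compositions `p`
whose parts rearrange to `λ`. -/
def Eidem (n : ℕ) (lam : List ℤ) : MonoidAlgebra ℂ (W n) :=
  ((Nat.factorial lam.length : ℂ))⁻¹ • ∑ᶠ p ∈ {q : List ℤ | List.Perm q lam}, eP n p

/-- `ω_m = e^{2πi/m}`. -/
def omegaC (m : ℕ) : ℂ := Complex.exp (2 * (Real.pi : ℂ) * Complex.I / (m : ℂ))

/-- `ζ_g = (1/m) Σ_{j=1}^m ω_m^{-j} g^j`, where `m` is the order of `g`. -/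
def zeta {G : Type*} [Group G] (g : G) : MonoidAlgebra ℂ G :=
  ((orderOf g : ℂ))⁻¹ • ∑ j ∈ Finset.range (orderOf g),
    ((omegaC (orderOf g)) ^ (j + 1))⁻¹ • MonoidAlgebra.single (g ^ (j + 1)) (1 : ℂ)

/-- `ζ̃_g = (1/m) Σ_{j=1}^m (ω_m^{(m+1)/2})^{-j} g^j`, where `m` is the order of `g`. -/
def zetaTilde {G : Type*} [Group G] (g : G) : MonoidAlgebra ℂ G :=
  ((orderOf g : ℂ))⁻¹ • ∑ j ∈ Finset.range (orderOf g),
    (((omegaC (orderOf g)) ^ ((orderOf g + 1) / 2)) ^ (j + 1))⁻¹ •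
      MonoidAlgebra.single (g ^ (j + 1)) (1 : ℂ)

/-- The positive cycle `c_i` on the block `Λ_i` of `λ`. -/
def cCyc (n : ℕ) (lam : List ℤ) (i : ℕ) : W n :=
  toW n (posCycle (phat lam i) (phat lam (i + 1)))

/-- The negative cycle `d_i` on the block `Λ_i` of `λ`: `c_i w_{0,Λ_i}` if `λ_i` is odd,
the negative `|λ_i|`-cycle if `λ_i` is even. -/
def dCyc (n : ℕ) (lam : List ℤ) (i : ℕ) : W n :=
  if Odd (lam.getD i 0) then cCyc n lam i * toW n (negOn (blk lam i))
  else toW n (negCycle (phat lam i) (phat lam (i + 1)))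

/-- `w_λ = c_1 ⋯ c_a d_{a+1} ⋯ d_{a+b}`, an element of signed cycle type `λ`. -/
def wLam (n : ℕ) (lam : List ℤ) : W n :=
  ((List.range lam.length).map (fun i =>
    if i < posCount lam then cCyc n lam i else dCyc n lam i)).prod

/-- The function underlying `y_i`, which switches the consecutive blocks `Λ_i` and `Λ_{i+1}`. -/
def yFun (lam : List ℤ) (i : ℕ) : ℤ → ℤ := oddify fun a =>
  if a ∈ blk lam i then a + ((lam.getD i 0).natAbs : ℤ)
  else if a ∈ blk lam (i + 1) then a - ((lam.getD i 0).natAbs : ℤ) else a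

def yW (n : ℕ) (lam : List ℤ) (i : ℕ) : W n := toW n (permOfFun (yFun lam i))

/-- The factor `f_i` of `ẽ_λ`. -/
def fElt (n : ℕ) (lam : List ℤ) (i : ℕ) : MonoidAlgebra ℂ (W n) :=
  if i < posCount lam then epsP n (blk lam i) true * zeta (cCyc n lam i)
  else if Odd (lam.getD i 0) then epsP n (blk lam i) false * zetaTilde (cCyc n lam i)
  else zeta (dCyc n lam i)

/-- `ẽ_λ = x_{|λ|} f_1 ⋯ f_{a+b}`. -/
def eTilde (n : ℕ) (lam : List ℤ) : MonoidAlgebra ℂ (W n) :=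
  xp n (absList lam) * ((List.range lam.length).map (fElt n lam)).prod

/-- The right ideal `e · ℂG`, as a right `ℂG`-submodule (i.e. a `(ℂG)ᵐᵒᵖ`-submodule) of `ℂG`. -/
def rIdeal {G : Type*} [Group G] (e : MonoidAlgebra ℂ G) :
    Submodule (MonoidAlgebra ℂ G)ᵐᵒᵖ (MonoidAlgebra ℂ G) where
  carrier := {x | ∃ y, x = e * y}
  add_mem' := by
    rintro x₁ x₂ ⟨y₁, h₁⟩ ⟨y₂, h₂⟩
    exact ⟨y₁ + y₂, by rw [h₁, h₂, mul_add]⟩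
  zero_mem' := ⟨0, (mul_zero e).symm⟩
  smul_mem' := by
    rintro r x ⟨y, h⟩
    exact ⟨y * r.unop, by rw [MulOpposite.smul_eq_mul_unop, h, mul_assoc]⟩

/-- The right ideal `e · ℂG`, as a ℂ-subspace of `ℂG`. -/
def rIdealC {G : Type*} [Group G] (e : MonoidAlgebra ℂ G) :
    Submodule ℂ (MonoidAlgebra ℂ G) where
  carrier := {x | ∃ y, x = e * y}
  add_mem' := by
    rintro x₁ x₂ ⟨y₁, h₁⟩ ⟨y₂, h₂⟩
    exact ⟨y₁ + y₂, by rw [h₁, h₂, mul_add]⟩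
  zero_mem' := ⟨0, (mul_zero e).symm⟩
  smul_mem' := by
    rintro c x ⟨y, h⟩
    exact ⟨c • y, by rw [h, mul_smul_comm]⟩

lemma rIdealC_mul_mem {G : Type*} [Group G] {e x : MonoidAlgebra ℂ G}
    (hx : x ∈ rIdealC e) (y : MonoidAlgebra ℂ G) : x * y ∈ rIdealC e := by
  obtain ⟨z, hz⟩ := hx
  exact ⟨z * y, by rw [hz, mul_assoc]⟩

open scoped Classical in
/-- The characteristic function `u_μ` of the conjugacy class of `w_μ`,
i.e. of the conjugacy class of signed cycle type `μ`. -/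
def uFun (n : ℕ) (mu : List ℤ) : W n → ℂ := fun g => if IsConj (wLam n mu) g then 1 else 0

open scoped Classical in
/-- The character of `W n` induced from the function `φ` on the subset `S` (viewed as the
extension of `φ` by zero outside `S`): `(1/|S|) Σ_{x ∈ W n} φ̇(x⁻¹ g x)`. -/
def indCharOn (n : ℕ) (S : Set (W n)) (φ : W n → ℂ) (g : W n) : ℂ :=
  (Nat.card S : ℂ)⁻¹ * ∑ᶠ x : W n, if x⁻¹ * g * x ∈ S then φ (x⁻¹ * g * x) else 0

/-- The usual inner product of class functions on `W n`. -/
def innerCF (n : ℕ) (φ ψ : W n → ℂ) : ℂ :=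
  (Nat.card (W n) : ℂ)⁻¹ * ∑ᶠ w : W n, φ w * (starRingEnd ℂ) (ψ w)

end HypOct
namespace HypOct

/-- `(J_1, …, J_k)` is an ordered set partition of `[n]` with `|J_i| = |p_i|` for all `i`. -/
def IsOSP (n : ℕ) (p : List ℤ) (J : List (Finset ℤ)) : Prop :=
  J.length = p.length ∧
  (∀ i < p.length, (J.getD i ∅).card = (p.getD i 0).natAbs) ∧
  (∀ i < p.length, ∀ j < p.length, i ≠ j → Disjoint (J.getD i ∅) (J.getD j ∅)) ∧
  J.foldr (· ∪ ·) ∅ = Finset.Icc (1 : ℤ) (n : ℤ)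

/-- The function underlying `w_{(J_1, …, J_k)}`, mapping the block `P_i`
order-preservingly onto `J_i`. -/
def ospFun (p : List ℤ) (J : List (Finset ℤ)) : ℤ → ℤ := oddify fun a =>
  match (List.range p.length).find?
      (fun i => decide ((phat p i : ℤ) < a ∧ a ≤ (phat p (i + 1) : ℤ))) with
  | some i => ((J.getD i ∅).sort (· ≤ ·)).getD (a - (phat p i : ℤ) - 1).toNat 0
  | none => a

/-- `w_{(J_1, …, J_k)} ∈ S_n ⊆ W_n`. -/
def wOSP (n : ℕ) (p : List ℤ) (J : List (Finset ℤ)) : W n := toW n (permOfFun (ospFun p J))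

/-!
Since `x_{|p|}` is the sum of the minimal representatives `X_{|p|}`, the theorem says that
`X_{|p|}` consists exactly of the distinct elements `w_{(J_1,…,J_k)}`.

The Coxeter length on `W_n` is the type-B inversion number
`#{i < j | w j < w i} + #{i ≤ j | w i + w j < 0}`: right multiplication by a generator changes it
by at most one, and as long as `w ≠ 1` some generator (a descent `s_a`, or `t₁` when `w 1 < 0`)
lowers it by one. Hence a minimal representative of a coset `w W_{|p|}` is positive on `[n]` and
increasing on each block, since otherwise negating an entry or swapping two neighbours inside a
block shortens it. Conversely, such a `w` has no pair with negative sum, and its inversions inject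
into the type-B inversions of every `w v` with `v ∈ W_{|p|}`. Finally, the elements that are
positive on `[n]` and increasing on the blocks are exactly the `w_{(J_1,…,J_k)}`, with
`J_i = w(P_i)`.
-/

lemma lt_or_lt_neg_of_abs_lt {α : Type*} [AddCommGroup α] [LinearOrder α] [IsOrderedAddMonoid α]
    {x y : α} (h : |y| < |x|) : y < x ∨ y < -x := by
  rcases le_or_gt 0 x with hx | hx
  · exact Or.inl ((le_abs_self y).trans_lt (h.trans_eq (abs_of_nonneg hx)))
  · exact Or.inr ((le_abs_self y).trans_lt (h.trans_eq (abs_of_neg hx)))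

lemma permOfFun_coe {f : ℤ → ℤ} (e : Perm') (he : ⇑e = f) : ⇑(permOfFun f) = f := by
  have h : ∃ e : Perm', ⇑e = f := ⟨e, he⟩
  rw [permOfFun, dif_pos h]
  exact h.choose_spec

lemma toW_coe {n : ℕ} {e : Perm'} (h : e ∈ W n) : ((toW n e : W n) : Perm') = e := by
  rw [toW, dif_pos h]

section oddify

variable (f : ℤ → ℤ)

lemma oddify_of_pos {a : ℤ} (ha : 0 < a) : oddify f a = f a := by
  simp [oddify, ha]

lemma oddify_neg (a : ℤ) : oddify f (-a) = -oddify f a := by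
  rcases lt_trichotomy a 0 with h | rfl | h
  · simp [oddify, h, h.not_gt]
  · simp [oddify]
  · simp [oddify, h, h.not_gt]

lemma oddify_zero : oddify f 0 = 0 := by
  simp [oddify]

variable {f}

lemma oddify_involutive (hpos : ∀ a, 0 < a → 0 < f a) (hinv : ∀ a, 0 < a → f (f a) = a) :
    Function.Involutive (oddify f) := by
  have key : ∀ a, 0 < a → oddify f (oddify f a) = a := fun a ha => by
    rw [oddify_of_pos f ha, oddify_of_pos f (hpos a ha), hinv a ha]
  intro a
  rcases lt_trichotomy a 0 with h | rfl | h
  · simpa [oddify_neg] using key (-a) (neg_pos.2 h)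
  · simp [oddify_zero]
  · exact key a h

lemma bijective_of_odd {g : ℤ → ℤ} (hodd : ∀ a, g (-a) = -g a)
    (hbij : Set.BijOn g (Set.Ioi 0) (Set.Ioi 0)) : Function.Bijective g := by
  have h0 : g 0 = 0 := by have := hodd 0; rw [neg_zero] at this; omega
  have habs : ∀ a, g |a| = |g a| := fun a => by
    rcases lt_trichotomy a 0 with h | rfl | h
    · have := hbij.mapsTo (Set.mem_Ioi.2 (neg_pos.2 h))
      rw [abs_of_neg h, hodd, abs_of_neg (by simpa [hodd] using this)]
    · simp [h0]
    · rw [abs_of_pos h, abs_of_pos (hbij.mapsTo (Set.mem_Ioi.2 h))]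
  have hsign : ∀ a, 0 < a → 0 < g a := fun a ha => hbij.mapsTo ha
  have hinj : ∀ a b, 0 ≤ a → 0 ≤ b → g a = g b → a = b := fun a b ha hb hab => by
    rcases ha.eq_or_lt with rfl | ha <;> rcases hb.eq_or_lt with rfl | hb
    · rfl
    · exact absurd hab (by rw [h0]; exact (hsign b hb).ne)
    · exact absurd hab (by rw [h0]; exact (hsign a ha).ne')
    · exact hbij.injOn ha hb hab
  refine ⟨fun a b hab => ?_, fun y => ?_⟩
  · rcases abs_eq_abs.1 (hinj _ _ (abs_nonneg a) (abs_nonneg b) (by rw [habs, habs, hab]))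
      with h | rfl
    · exact h
    · have : g b = 0 := by rw [hodd] at hab; omega
      have := hinj _ _ (abs_nonneg b) le_rfl (by rw [habs, this, h0, abs_zero])
      rw [abs_eq_zero.1 this, neg_zero]
  · rcases lt_trichotomy y 0 with hy | rfl | hy
    · obtain ⟨a, -, ha⟩ := hbij.surjOn (Set.mem_Ioi.2 (neg_pos.2 hy))
      exact ⟨-a, by rw [hodd, ha, neg_neg]⟩
    · exact ⟨0, h0⟩
    · obtain ⟨a, -, ha⟩ := hbij.surjOn (Set.mem_Ioi.2 hy)
      exact ⟨a, ha⟩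

end oddify

namespace W

variable {n : ℕ} (w : W n)

lemma apply_neg (a : ℤ) : (w : Perm') (-a) = -(w : Perm') a := w.2.1 a

lemma apply_of_lt_abs {a : ℤ} (h : (n : ℤ) < |a|) : (w : Perm') a = a := w.2.2 a h

lemma apply_zero : (w : Perm') 0 = 0 := by
  have := W.apply_neg w 0
  rw [neg_zero] at this
  omega

lemma abs_apply_le {a : ℤ} (h : |a| ≤ n) : |(w : Perm') a| ≤ n := by
  by_contra! hlt
  have := W.apply_of_lt_abs (w⁻¹) hlt
  rw [Subgroup.coe_inv, Equiv.Perm.inv_def, Equiv.symm_apply_apply] at this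
  rw [← this] at hlt
  exact hlt.not_ge h

lemma apply_ne_zero {a : ℤ} (h : a ≠ 0) : (w : Perm') a ≠ 0 := by
  rw [← W.apply_zero w]
  exact (w : Perm').injective.ne h

lemma apply_mem_Icc {a : ℤ} (h1 : 1 ≤ a) (h2 : a ≤ n) (hpos : 0 < (w : Perm') a) :
    (w : Perm') a ∈ Finset.Icc (1 : ℤ) n := by
  have := W.abs_apply_le w (a := a) (by rw [abs_of_pos (by omega)]; exact h2)
  rw [abs_of_pos hpos] at this
  exact Finset.mem_Icc.2 ⟨hpos, this⟩

instance : Finite (W n) := by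
  let I := Finset.Icc (-(n : ℤ)) n
  have hI : ∀ a, a ∈ I ↔ |a| ≤ n := fun a => by rw [Finset.mem_Icc, abs_le]
  refine Finite.of_injective
    (fun (w : W n) (a : I) => (⟨(w : Perm') a, (hI _).2 (W.abs_apply_le w ((hI _).1 a.2))⟩ : I))
    fun w v h => Subtype.ext (Equiv.ext fun a => ?_)
  by_cases ha : |a| ≤ n
  · simpa using congrFun h ⟨a, (hI a).2 ha⟩
  · rw [W.apply_of_lt_abs w (not_le.1 ha), W.apply_of_lt_abs v (not_le.1 ha)]

end W

lemma W.ext_of_pos {n : ℕ} {w v : W n} (h : ∀ a, 0 < a → (w : Perm') a = (v : Perm') a) :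
    w = v := by
  refine Subtype.ext (Equiv.ext fun a => ?_)
  rcases lt_trichotomy a 0 with ha | rfl | ha
  · rw [← neg_neg a, W.apply_neg w, W.apply_neg v, h _ (neg_pos.2 ha)]
  · rw [W.apply_zero w, W.apply_zero v]
  · exact h a ha

lemma W.abs_apply_abs {n : ℕ} (w : W n) (a : ℤ) : |(w : Perm') (|a|)| = |(w : Perm') a| := by
  rcases abs_cases a with ⟨h, -⟩ | ⟨h, -⟩ <;> rw [h]
  rw [W.apply_neg, abs_neg]

lemma W.injOn_abs_apply {n : ℕ} (w : W n) : Set.InjOn (fun a => |(w : Perm') a|) (Set.Ioi 0) := by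
  intro a ha b hb hab
  rw [Set.mem_Ioi] at ha hb
  rcases abs_eq_abs.1 hab with h | h
  · exact (w : Perm').injective h
  · rw [← W.apply_neg] at h
    have := (w : Perm').injective h
    omega

lemma negOnFun_involutive (P : Finset ℤ) : Function.Involutive (negOnFun P) := by
  intro a
  unfold negOnFun
  split_ifs <;> simp_all [or_comm]

lemma coe_negOn (P : Finset ℤ) : ⇑(negOn P) = negOnFun P :=
  permOfFun_coe (negOnFun_involutive P).toPerm rfl

lemma negOn_mem_W {n : ℕ} {P : Finset ℤ} (hP : ∀ x ∈ P, 1 ≤ x ∧ x ≤ (n : ℤ)) :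
    negOn P ∈ W n := by
  refine ⟨fun a => ?_, fun a ha => ?_⟩
  · simp only [coe_negOn, negOnFun, neg_neg]
    split_ifs <;> simp_all [or_comm]
  · have : ¬(a ∈ P ∨ -a ∈ P) := by
      rintro (h | h) <;> have := hP _ h <;> rcases abs_cases a with ⟨_, _⟩ | ⟨_, _⟩ <;> omega
    simp only [coe_negOn, negOnFun, if_neg this]

/-- `flipAt n 1` is the Coxeter generator `t₁`. -/
def flipAt (n : ℕ) (a : ℤ) : W n := toW n (negOn {a})

def swapAt (n : ℕ) (a : ℤ) : W n := toW n (permOfFun (oddify (Equiv.swap a (a + 1))))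

section generators

variable {n : ℕ} {a : ℤ}

lemma coe_flipAt (ha : 1 ≤ a) (han : a ≤ n) : ⇑((flipAt n a : W n) : Perm') = negOnFun {a} := by
  rw [flipAt, toW_coe (negOn_mem_W (by simp [ha, han])), coe_negOn]

lemma flipAt_apply_self (ha : 1 ≤ a) (han : a ≤ n) : ((flipAt n a : W n) : Perm') a = -a := by
  simp [coe_flipAt ha han, negOnFun]

lemma flipAt_apply_of_pos (ha : 1 ≤ a) (han : a ≤ n) {x : ℤ} (hx : 0 < x) (hxa : x ≠ a) :
    ((flipAt n a : W n) : Perm') x = x := by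
  simp only [coe_flipAt ha han, negOnFun, Finset.mem_singleton]
  rw [if_neg (by omega)]

lemma oddify_swap_involutive (ha : 1 ≤ a) : Function.Involutive (oddify (Equiv.swap a (a + 1))) :=
  oddify_involutive (fun x hx => by rw [Equiv.swap_apply_def]; split_ifs <;> omega)
    (fun x _ => Equiv.swap_apply_self _ _ _)

lemma coe_permOfFun_swap (ha : 1 ≤ a) :
    ⇑(permOfFun (oddify (Equiv.swap a (a + 1)))) = oddify (Equiv.swap a (a + 1)) :=
  permOfFun_coe (oddify_swap_involutive ha).toPerm rfl

lemma permOfFun_swap_mem_W (ha : 1 ≤ a) (han : a + 1 ≤ n) :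
    permOfFun (oddify (Equiv.swap a (a + 1))) ∈ W n := by
  refine ⟨fun x => ?_, fun x hx => ?_⟩
  · rw [coe_permOfFun_swap ha, oddify_neg]
  rw [coe_permOfFun_swap ha]
  rcases abs_cases x with ⟨h, hx0⟩ | ⟨h, hx0⟩
  · rw [oddify_of_pos _ (by omega), Equiv.swap_apply_of_ne_of_ne (by omega) (by omega)]
  · rw [← neg_neg x, oddify_neg, oddify_of_pos _ (by omega),
      Equiv.swap_apply_of_ne_of_ne (by omega) (by omega)]

lemma coe_swapAt (ha : 1 ≤ a) (han : a + 1 ≤ n) :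
    ⇑((swapAt n a : W n) : Perm') = oddify (Equiv.swap a (a + 1)) := by
  rw [swapAt, toW_coe (permOfFun_swap_mem_W ha han), coe_permOfFun_swap ha]

lemma swapAt_apply_of_pos (ha : 1 ≤ a) (han : a + 1 ≤ n) {x : ℤ} (hx : 0 < x) :
    ((swapAt n a : W n) : Perm') x = Equiv.swap a (a + 1) x := by
  rw [coe_swapAt ha han, oddify_of_pos _ hx]

lemma flipAt_mul_self (ha : 1 ≤ a) (han : a ≤ n) : flipAt n a * flipAt n a = 1 :=
  Subtype.ext <| Equiv.ext fun x => by
    simp only [Subgroup.coe_mul, Equiv.Perm.mul_apply, coe_flipAt ha han, negOnFun_involutive _ x,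
      OneMemClass.coe_one, Equiv.Perm.one_apply]

lemma swapAt_mul_self (ha : 1 ≤ a) (han : a + 1 ≤ n) : swapAt n a * swapAt n a = 1 :=
  Subtype.ext <| Equiv.ext fun x => by
    simp only [Subgroup.coe_mul, Equiv.Perm.mul_apply, coe_swapAt ha han,
      oddify_swap_involutive ha x, OneMemClass.coe_one, Equiv.Perm.one_apply]

lemma flipAt_one_mem_genSet (hn : 1 ≤ n) : flipAt n 1 ∈ genSet n :=
  Or.inl (toW_coe (negOn_mem_W (by simp [hn])))

lemma swapAt_mem_genSet {i : ℕ} (hi : 1 ≤ i) (hin : i + 1 ≤ n) : swapAt n i ∈ genSet n := by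
  refine Or.inr ⟨i, hi, hin, ?_⟩
  rw [swapAt, toW_coe (permOfFun_swap_mem_W (by exact_mod_cast hi) (by exact_mod_cast hin))]
  rfl

lemma mem_genSet {g : W n} (hg : g ∈ genSet n) :
    (1 ≤ n ∧ g = flipAt n 1) ∨ ∃ i : ℕ, 1 ≤ i ∧ i + 1 ≤ n ∧ g = swapAt n i := by
  rcases hg with h | ⟨i, hi, hin, h⟩
  · have hn : 1 ≤ n := by
      by_contra! hn
      have := W.apply_of_lt_abs g (a := 1) (by rw [abs_one]; omega)
      simp [h, coe_negOn, negOnFun] at this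
    refine Or.inl ⟨hn, Subtype.ext ?_⟩
    rw [h, flipAt, toW_coe (negOn_mem_W (by simp [hn]))]
  · refine Or.inr ⟨i, hi, hin, Subtype.ext ?_⟩
    rw [h, swapAt, toW_coe (permOfFun_swap_mem_W (by exact_mod_cast hi) (by exact_mod_cast hin))]
    rfl

end generators

/-! ### The type-B inversion number -/

def pairInv (f : ℤ → ℤ) (x : ℤ × ℤ) : ℕ :=
  (if x.1 < x.2 ∧ f x.2 < f x.1 then 1 else 0) + (if x.1 ≤ x.2 ∧ f x.2 < -f x.1 then 1 else 0)

def bInv (n : ℕ) (f : ℤ → ℤ) : ℕ :=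
  ∑ x ∈ Finset.Icc (1 : ℤ) n ×ˢ Finset.Icc (1 : ℤ) n, pairInv f x

lemma bInv_eq_card (n : ℕ) (f : ℤ → ℤ) : bInv n f =
    ((Finset.Icc (1 : ℤ) n ×ˢ Finset.Icc (1 : ℤ) n).filter
        fun x => x.1 < x.2 ∧ f x.2 < f x.1).card +
      ((Finset.Icc (1 : ℤ) n ×ˢ Finset.Icc (1 : ℤ) n).filter
        fun x => x.1 ≤ x.2 ∧ f x.2 < -f x.1).card := by
  simp only [bInv, pairInv, Finset.sum_add_distrib, Finset.card_filter]

section localMoves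

variable {n : ℕ} {f f' : ℤ → ℤ} {a : ℤ}

lemma swap_lt_swap_iff {i j : ℤ} (h : ¬(i = a ∧ j = a + 1 ∨ i = a + 1 ∧ j = a)) :
    Equiv.swap a (a + 1) i < Equiv.swap a (a + 1) j ↔ i < j := by
  simp only [Equiv.swap_apply_def]
  split_ifs <;> omega

lemma bInv_swap (ha : 1 ≤ a) (han : a + 1 ≤ n)
    (hf : ∀ x ∈ Finset.Icc (1 : ℤ) n, f' x = f (Equiv.swap a (a + 1) x)) :
    bInv n f' + (if f (a + 1) < f a then 1 else 0) =
      bInv n f + (if f a < f (a + 1) then 1 else 0) := by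
  set τ := Equiv.swap a (a + 1)
  set S := Finset.Icc (1 : ℤ) n ×ˢ Finset.Icc (1 : ℤ) n
  -- `f' = f ∘ τ` on `[n]`, and `τ` preserves the relative order of all pairs but `(a, a+1)`
  let Q : ℤ × ℤ → ℕ := fun x =>
    (if τ x.1 < τ x.2 ∧ f x.2 < f x.1 then 1 else 0) +
      (if τ x.1 ≤ τ x.2 ∧ f x.2 < -f x.1 then 1 else 0)
  have hτS : ∀ x, x ∈ S ↔ Equiv.prodCongr τ τ x ∈ S := fun x => by
    simp only [S, τ, Finset.mem_product, Finset.mem_Icc, Equiv.prodCongr_apply, Prod.map,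
      Equiv.swap_apply_def]
    split_ifs <;> omega
  have hQ : bInv n f' = ∑ x ∈ S, Q x := by
    refine (Finset.sum_equiv (Equiv.prodCongr τ τ) hτS fun x hx => ?_).symm
    obtain ⟨h1, h2⟩ := Finset.mem_product.1 ((hτS x).1 hx)
    simp only [Equiv.prodCongr_apply, Prod.map_fst, Prod.map_snd] at h1 h2
    simp only [Q, pairInv, Equiv.prodCongr_apply, Prod.map_fst, Prod.map_snd, hf _ h1, hf _ h2, τ,
      Equiv.swap_apply_self]
  set T : Finset (ℤ × ℤ) := {(a, a + 1), (a + 1, a)}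
  have hTS : T ⊆ S := by
    simp only [T, S, Finset.insert_subset_iff, Finset.singleton_subset_iff, Finset.mem_product,
      Finset.mem_Icc]
    omega
  have hoff : ∀ x ∈ S \ T, Q x = pairInv f x := fun x hx => by
    have hxT : ¬(x.1 = a ∧ x.2 = a + 1 ∨ x.1 = a + 1 ∧ x.2 = a) := by
      have := (Finset.mem_sdiff.1 hx).2
      simp only [T, Finset.mem_insert, Finset.mem_singleton, Prod.ext_iff] at this
      exact this
    have hlt : τ x.1 < τ x.2 ↔ x.1 < x.2 := swap_lt_swap_iff hxT
    have hle : τ x.1 ≤ τ x.2 ↔ x.1 ≤ x.2 := by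
      rw [← not_lt, ← not_lt, swap_lt_swap_iff (by tauto)]
    simp only [Q, pairInv, hlt, hle]
  have hT : ∑ x ∈ T, Q x + (if f (a + 1) < f a then 1 else 0) =
      ∑ x ∈ T, pairInv f x + (if f a < f (a + 1) then 1 else 0) := by
    rw [Finset.sum_pair (by simp), Finset.sum_pair (by simp)]
    simp only [Q, pairInv, τ, Equiv.swap_apply_left, Equiv.swap_apply_right]
    split_ifs <;> omega
  rw [hQ, bInv, ← Finset.sum_sdiff hTS, ← Finset.sum_sdiff hTS (f := pairInv f),
    Finset.sum_congr rfl hoff, add_assoc, hT, add_assoc]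

lemma bInv_flip (ha : 1 ≤ a) (han : a ≤ n) (hfa : f' a = -f a)
    (hf : ∀ x ∈ Finset.Icc (1 : ℤ) n, x ≠ a → f' x = f x) :
    bInv n f' + ∑ i ∈ Finset.Icc (1 : ℤ) n, pairInv f (i, a) =
      bInv n f + ∑ i ∈ Finset.Icc (1 : ℤ) n, pairInv f' (i, a) := by
  classical
  have hmem : a ∈ Finset.Icc (1 : ℤ) n := Finset.mem_Icc.2 ⟨ha, han⟩
  -- for `j ≠ a` the pair `(a, j)` counts `f j < f a` and `f j < -f a` symmetrically
  have hcol : ∀ j ∈ (Finset.Icc (1 : ℤ) n).erase a, ∀ i ∈ Finset.Icc (1 : ℤ) n,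
      pairInv f' (i, j) = pairInv f (i, j) := fun j hj i hi => by
    obtain ⟨hja, hjn⟩ := Finset.mem_erase.1 hj
    by_cases hia : i = a
    · simp only [pairInv, hia, hfa, hf j hjn hja]
      split_ifs <;> omega
    · simp only [pairInv, hf i hi hia, hf j hjn hja]
  have hsplit : ∀ g, bInv n g = ∑ i ∈ Finset.Icc (1 : ℤ) n, pairInv g (i, a) +
      ∑ j ∈ (Finset.Icc (1 : ℤ) n).erase a, ∑ i ∈ Finset.Icc (1 : ℤ) n, pairInv g (i, j) :=
    fun g => by rw [bInv, Finset.sum_product_right, ← Finset.add_sum_erase _ _ hmem]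
  rw [hsplit f', hsplit f, Finset.sum_congr rfl fun j hj => Finset.sum_congr rfl (hcol j hj)]
  ring

lemma sum_pairInv_one (f : ℤ → ℤ) (hn : 1 ≤ n) :
    ∑ i ∈ Finset.Icc (1 : ℤ) n, pairInv f (i, 1) = if f 1 < 0 then 1 else 0 := by
  rw [Finset.sum_eq_single (1 : ℤ)]
  · simp only [pairInv, lt_irrefl, false_and, if_false, le_refl, true_and, zero_add]
    exact if_congr (by omega) rfl rfl
  · intro i hi hi1
    simp only [pairInv, Finset.mem_Icc] at hi ⊢
    split_ifs <;> omega
  · simp [hn]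

lemma bInv_flip_one (hn : 1 ≤ n) (hf1 : f' 1 = -f 1)
    (hf : ∀ x ∈ Finset.Icc (1 : ℤ) n, x ≠ 1 → f' x = f x) :
    bInv n f' + (if f 1 < 0 then 1 else 0) = bInv n f + (if 0 < f 1 then 1 else 0) := by
  have := bInv_flip le_rfl (by exact_mod_cast hn) hf1 hf
  rw [sum_pairInv_one f hn, sum_pairInv_one f' hn, hf1] at this
  rw [this, if_congr (neg_neg_iff_pos (a := f 1)) rfl rfl]

lemma bInv_flip_lt (ha : 1 ≤ a) (han : a ≤ n) (hneg : f a < 0) (hfa : f' a = -f a)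
    (hf : ∀ x ∈ Finset.Icc (1 : ℤ) n, x ≠ a → f' x = f x) : bInv n f' < bInv n f := by
  have hsum : ∑ i ∈ Finset.Icc (1 : ℤ) n, pairInv f' (i, a) <
      ∑ i ∈ Finset.Icc (1 : ℤ) n, pairInv f (i, a) := by
    refine Finset.sum_lt_sum (fun i hi => ?_) ⟨a, Finset.mem_Icc.2 ⟨ha, han⟩, ?_⟩
    · by_cases hia : i = a
      · subst hia
        simp only [pairInv, hfa]
        split_ifs <;> omega
      · simp only [pairInv, hfa, hf i hi hia]
        split_ifs <;> omega
    · simp only [pairInv, hfa]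
      split_ifs <;> omega
  have := bInv_flip ha han hfa hf
  omega

end localMoves

section length

variable {n : ℕ}

lemma bInv_one : bInv n ((1 : W n) : Perm') = 0 :=
  Finset.sum_eq_zero fun x hx => by
    simp only [Finset.mem_product, Finset.mem_Icc] at hx
    change pairInv id x = 0
    simp only [pairInv, id]
    split_ifs <;> omega

lemma bInv_mul_flipAt_one (hn : 1 ≤ n) (w : W n) :
    bInv n ((w * flipAt n 1 : W n) : Perm') + (if (w : Perm') 1 < 0 then 1 else 0) =
      bInv n (w : Perm') + (if 0 < (w : Perm') 1 then 1 else 0) := by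
  have hn' : (1 : ℤ) ≤ n := by exact_mod_cast hn
  refine bInv_flip_one hn ?_ fun x hx hx1 => ?_
  · rw [Subgroup.coe_mul, Equiv.Perm.mul_apply, flipAt_apply_self le_rfl hn', W.apply_neg]
  · rw [Subgroup.coe_mul, Equiv.Perm.mul_apply,
      flipAt_apply_of_pos le_rfl hn' (Finset.mem_Icc.1 hx).1 hx1]

lemma bInv_mul_flipAt_lt {a : ℤ} (ha : 1 ≤ a) (han : a ≤ n) (w : W n)
    (hneg : (w : Perm') a < 0) :
    bInv n ((w * flipAt n a : W n) : Perm') < bInv n (w : Perm') := by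
  refine bInv_flip_lt ha han hneg ?_ fun x hx hxa => ?_
  · rw [Subgroup.coe_mul, Equiv.Perm.mul_apply, flipAt_apply_self ha han, W.apply_neg]
  · rw [Subgroup.coe_mul, Equiv.Perm.mul_apply,
      flipAt_apply_of_pos ha han (by linarith [(Finset.mem_Icc.1 hx).1]) hxa]

lemma bInv_mul_swapAt {a : ℤ} (ha : 1 ≤ a) (han : a + 1 ≤ n) (w : W n) :
    bInv n ((w * swapAt n a : W n) : Perm') +
        (if (w : Perm') (a + 1) < (w : Perm') a then 1 else 0) =
      bInv n (w : Perm') + (if (w : Perm') a < (w : Perm') (a + 1) then 1 else 0) :=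
  bInv_swap ha han fun x hx => by
    rw [Subgroup.coe_mul, Equiv.Perm.mul_apply,
      swapAt_apply_of_pos ha han (by linarith [(Finset.mem_Icc.1 hx).1])]

lemma bInv_mul_le (w : W n) {g : W n} (hg : g ∈ genSet n) :
    bInv n ((w * g : W n) : Perm') ≤ bInv n (w : Perm') + 1 := by
  rcases mem_genSet hg with ⟨hn, rfl⟩ | ⟨i, hi, hin, rfl⟩
  · have := bInv_mul_flipAt_one hn w
    split_ifs at this <;> omega
  · have := bInv_mul_swapAt (a := i) (by exact_mod_cast hi) (by exact_mod_cast hin) w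
    split_ifs at this <;> omega

lemma bInv_prod_le (l : List (W n)) (hl : ∀ g ∈ l, g ∈ genSet n) :
    bInv n (l.prod : Perm') ≤ l.length := by
  induction l using List.reverseRecOn with
  | nil =>
    rw [List.prod_nil, bInv_one]
    exact Nat.zero_le _
  | append_singleton l g ih =>
    rw [List.prod_append, List.prod_singleton, List.length_append, List.length_singleton]
    have := bInv_mul_le l.prod (hl g (by simp))
    have := ih fun x hx => hl x (by simp [hx])
    omega

lemma W.eq_one_of_lt_add_one (w : W n) (h1 : 0 < (w : Perm') 1)
    (hmono : ∀ a : ℤ, 1 ≤ a → a + 1 ≤ n → (w : Perm') a < (w : Perm') (a + 1)) : w = 1 := by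
  have hge : ∀ a : ℤ, 1 ≤ a → a ≤ n → a ≤ (w : Perm') a := by
    intro a ha
    induction a, ha using Int.leInduction with
    | base => exact fun _ => h1
    | succ a ha ih => exact fun han => by linarith [ih (by omega), hmono a ha han]
  have hle : ∀ a : ℤ, a ≤ n → 1 ≤ a → (w : Perm') a ≤ a := by
    intro a ha
    induction a, ha using Int.leInductionDown with
    | base => exact fun _ => le_of_abs_le (W.abs_apply_le w (by simp))
    | pred a ha ih =>
      intro ha1
      have := hmono (a - 1) ha1 (by omega)
      rw [sub_add_cancel] at this
      linarith [ih (by omega)]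
  refine W.ext_of_pos fun a ha => ?_
  rw [OneMemClass.coe_one, Equiv.Perm.one_apply]
  by_cases han : a ≤ n
  · exact le_antisymm (hle a han ha) (hge a ha han)
  · exact W.apply_of_lt_abs w (by rw [abs_of_pos ha]; omega)

/-- Strip a right descent `s_a` (`w (a+1) < w a`) or `t₁` (`w 1 < 0`) while there is one. -/
lemma exists_word (w : W n) :
    ∃ l : List (W n), (∀ g ∈ l, g ∈ genSet n) ∧ l.prod = w ∧ l.length = bInv n (w : Perm') := by
  induction hk : bInv n (w : Perm') using Nat.strong_induction_on generalizing w with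
  | _ k ih =>
  have step : ∀ g ∈ genSet n, g * g = 1 → bInv n ((w * g : W n) : Perm') + 1 = k →
      ∃ l : List (W n), (∀ g ∈ l, g ∈ genSet n) ∧ l.prod = w ∧ l.length = k := by
    intro g hg hgg hlt
    obtain ⟨l, hl, hprod, hlen⟩ := ih _ (by omega) (w * g) rfl
    refine ⟨l ++ [g], fun x hx => ?_, ?_, ?_⟩
    · rcases List.mem_append.1 hx with hx | hx
      exacts [hl x hx, (List.mem_singleton.1 hx) ▸ hg]
    · rw [List.prod_append, List.prod_singleton, hprod, mul_assoc, hgg, mul_one]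
    · rw [List.length_append, List.length_singleton, hlen, hlt]
  by_cases hdesc : ∃ a : ℕ, 1 ≤ a ∧ a + 1 ≤ n ∧ (w : Perm') (a + 1) < (w : Perm') a
  · obtain ⟨a, ha, han, hlt⟩ := hdesc
    have ha' : (1 : ℤ) ≤ a := by exact_mod_cast ha
    have han' : (a : ℤ) + 1 ≤ n := by exact_mod_cast han
    have := bInv_mul_swapAt ha' han' w
    rw [if_pos hlt, if_neg hlt.not_gt] at this
    exact step _ (swapAt_mem_genSet ha han) (swapAt_mul_self ha' han') (by omega)
  by_cases hneg : (w : Perm') 1 < 0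
  · have hn : 1 ≤ n := by
      by_contra! hn
      rw [W.apply_of_lt_abs w (by rw [abs_one]; omega)] at hneg
      omega
    have := bInv_mul_flipAt_one hn w
    rw [if_pos hneg, if_neg hneg.not_gt] at this
    exact step _ (flipAt_one_mem_genSet hn) (flipAt_mul_self le_rfl (by exact_mod_cast hn))
      (by omega)
  have hw : w = 1 := by
    refine W.eq_one_of_lt_add_one w ?_ fun a ha han => ?_
    · have := W.apply_ne_zero w one_ne_zero
      omega
    · have hne : (w : Perm') a ≠ (w : Perm') (a + 1) := (w : Perm').injective.ne (by omega)
      have := not_lt.1 fun h => hdesc ⟨a.toNat, by omega, by omega, by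
        rwa [show ((a.toNat : ℕ) : ℤ) = a by omega]⟩
      omega
  subst hw
  exact ⟨[], by simp, rfl, by rw [← hk, bInv_one]; rfl⟩

lemma len_eq_bInv (w : W n) : len n w = bInv n (w : Perm') := by
  obtain ⟨l, hl, hprod, hlen⟩ := exists_word w
  refine le_antisymm (Nat.sInf_le ⟨l, hlen, hl, hprod⟩) (le_csInf ⟨_, l, hlen, hl, hprod⟩ ?_)
  rintro k ⟨l', rfl, hl', rfl⟩
  exact bInv_prod_le l' hl'

end length

section blocks

variable {n : ℕ} {p : List ℤ} {i j : ℕ} {a : ℤ}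

lemma phat_succ (h : i < p.length) : phat p (i + 1) = phat p i + (p.getD i 0).natAbs := by
  rw [phat, phat, List.take_add_one, List.map_append, List.sum_append,
    List.getElem?_eq_getElem h, List.getD_eq_getElem _ _ h]
  simp

lemma phat_mono (p : List ℤ) : Monotone (phat p) :=
  monotone_nat_of_le_succ fun i => by
    unfold phat
    rw [List.take_add_one, List.map_append, List.sum_append]
    exact Nat.le_add_right _ _

lemma phat_le (hp : IsSignedComposition n p) (i : ℕ) : phat p i ≤ n := by
  have := List.sum_take_add_sum_drop (p.map Int.natAbs) i
  rw [phat, List.map_take, ← hp.2]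
  omega

lemma pos_of_mem_blk (ha : a ∈ blk p i) : 0 < a := by
  rw [blk, Finset.mem_Icc] at ha
  omega

lemma blk_subset_Icc (hp : IsSignedComposition n p) (i : ℕ) :
    blk p i ⊆ Finset.Icc (1 : ℤ) n := fun a ha => by
  rw [blk, Finset.mem_Icc] at ha
  have := phat_le hp (i + 1)
  rw [Finset.mem_Icc]
  omega

lemma card_blk (hi : i < p.length) : (blk p i).card = (p.getD i 0).natAbs := by
  rw [blk, Int.card_Icc, phat_succ hi]
  omega

lemma lt_of_mem_blk_of_mem_blk (hij : i < j) {b : ℤ} (ha : a ∈ blk p i) (hb : b ∈ blk p j) :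
    a < b := by
  rw [blk, Finset.mem_Icc] at ha hb
  have : phat p (i + 1) ≤ phat p j := phat_mono p hij
  omega

lemma eq_of_mem_blk_of_mem_blk (hi : a ∈ blk p i) (hj : a ∈ blk p j) : i = j := by
  rcases lt_trichotomy i j with h | h | h
  · exact absurd (lt_of_mem_blk_of_mem_blk h hi hj) (lt_irrefl a)
  · exact h
  · exact absurd (lt_of_mem_blk_of_mem_blk h hj hi) (lt_irrefl a)

lemma exists_mem_blk (hp : IsSignedComposition n p) (ha : a ∈ Finset.Icc (1 : ℤ) n) :
    ∃ i < p.length, a ∈ blk p i := by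
  rw [Finset.mem_Icc] at ha
  have hlen : phat p p.length = n := by rw [phat, List.take_length, hp.2]
  -- the block of `a` is the last `i` with `p̂ i < a`
  have hi := Nat.findGreatest_spec (P := fun i => (phat p i : ℤ) < a) (m := 0) (n := p.length)
    (Nat.zero_le _) (by simp only [phat, List.take_zero, List.map_nil, List.sum_nil]; omega)
  have hnext := Nat.findGreatest_is_greatest (P := fun i => (phat p i : ℤ) < a)
    (k := Nat.findGreatest (fun i => (phat p i : ℤ) < a) p.length + 1) (Nat.lt_add_one _)
  have hle := Nat.findGreatest_le (P := fun i => (phat p i : ℤ) < a) p.length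
  generalize Nat.findGreatest (fun i => (phat p i : ℤ) < a) p.length = i at hi hnext hle
  have hilen : i < p.length := by
    refine lt_of_le_of_ne hle fun h => ?_
    rw [h, hlen] at hi
    omega
  refine ⟨i, hilen, ?_⟩
  have := hnext hilen
  rw [blk, Finset.mem_Icc]
  omega

lemma length_absList : (absList p).length = p.length := List.length_map _

lemma blk_absList (p : List ℤ) (i : ℕ) : blk (absList p) i = blk p i := by
  have : ∀ k, phat (absList p) k = phat p k := fun k => by
    simp only [phat, absList, ← List.map_take, List.map_map, Function.comp_def, Int.natAbs_abs]
  rw [blk, blk, this, this]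

end blocks

/-! ### Minimal coset representatives -/

def IncOnBlocks (n : ℕ) (p : List ℤ) (w : W n) : Prop :=
  (∀ a ∈ Finset.Icc (1 : ℤ) n, 0 < (w : Perm') a) ∧
    ∀ i < p.length, StrictMonoOn (w : Perm') (blk p i)

section cosets

variable {n : ℕ} {p : List ℤ}

lemma mem_or_neg_mem_blk_iff (i : ℕ) (x : ℤ) : x ∈ blk p i ∨ -x ∈ blk p i ↔ |x| ∈ blk p i := by
  rcases abs_cases x with ⟨h, hx⟩ | ⟨h, hx⟩ <;> rw [h]
  · exact ⟨fun h' => h'.resolve_right fun hn => by have := pos_of_mem_blk hn; omega, Or.inl⟩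
  · exact ⟨fun h' => h'.resolve_left fun hn => by have := pos_of_mem_blk hn; omega, Or.inr⟩

lemma mem_Wyoung_absList_iff {v : W n} : v ∈ Wyoung n (absList p) ↔
    ∀ i < p.length, Set.MapsTo (fun a => |(v : Perm') a|) (blk p i) (blk p i) := by
  have hmem := fun i a => mem_or_neg_mem_blk_iff (p := p) i ((v : Perm') a)
  refine ⟨fun h i hi a ha => ?_, fun h i hi => ⟨fun a ha => ?_, fun hneg => ?_⟩⟩
  · have := (h i (by rwa [length_absList])).1 a (by rwa [blk_absList])
    rwa [blk_absList, hmem] at this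
  · rw [blk_absList] at ha ⊢
    exact (hmem i a).2 (h i (by rwa [← length_absList]) ha)
  · rw [length_absList] at hi
    simp only [absList, List.getD_eq_getElem?_getD, List.getElem?_map, List.getElem?_eq_getElem hi,
      Option.map_some, Option.getD_some] at hneg
    exact absurd hneg (not_lt.2 (abs_nonneg _))

lemma inv_mem_Wyoung_absList {v : W n} (hv : v ∈ Wyoung n (absList p)) :
    v⁻¹ ∈ Wyoung n (absList p) := by
  rw [mem_Wyoung_absList_iff] at hv ⊢
  intro i hi a ha
  -- `|v ·|` maps the finite block `P_i` injectively into itself, hence onto it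
  have hinj : Set.InjOn (fun x => |(v : Perm') x|) (blk p i) :=
    (W.injOn_abs_apply v).mono fun x hx => pos_of_mem_blk hx
  obtain ⟨b, hb, hba⟩ := Finset.surjOn_of_injOn_of_card_le _ (hv i hi) hinj le_rfl ha
  subst hba
  show |((v⁻¹ : W n) : Perm') (|(v : Perm') b|)| ∈ blk p i
  rwa [W.abs_apply_abs, Subgroup.coe_inv, Equiv.Perm.inv_def, Equiv.symm_apply_apply,
    abs_of_pos (pos_of_mem_blk hb)]

lemma flipAt_mem_Wyoung_absList {a : ℤ} (ha : 1 ≤ a) (han : a ≤ n) :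
    flipAt n a ∈ Wyoung n (absList p) := by
  rw [mem_Wyoung_absList_iff]
  intro i _ b hb
  simp only [coe_flipAt ha han, negOnFun]
  split_ifs <;> simpa [abs_of_pos (pos_of_mem_blk hb)] using hb

lemma swapAt_mem_Wyoung_absList {a : ℤ} (ha : 1 ≤ a) (han : a + 1 ≤ n) {i : ℕ}
    (hai : a ∈ blk p i) (hai' : a + 1 ∈ blk p i) : swapAt n a ∈ Wyoung n (absList p) := by
  rw [mem_Wyoung_absList_iff]
  intro j _ b hb
  have hpos := pos_of_mem_blk hb
  simp only [swapAt_apply_of_pos ha han hpos]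
  rw [Equiv.swap_apply_def]
  split_ifs with h1 h2
  · subst h1; rwa [abs_of_pos (by omega), ← eq_of_mem_blk_of_mem_blk hai hb]
  · subst h2; rwa [abs_of_pos (by omega), ← eq_of_mem_blk_of_mem_blk hai' hb]
  · rwa [abs_of_pos hpos]

lemma incOnBlocks_of_mem_Xmin (hp : IsSignedComposition n p) {w : W n}
    (hw : w ∈ Xmin n (absList p)) : IncOnBlocks n p w := by
  have hmin : ∀ v ∈ Wyoung n (absList p), bInv n (w : Perm') ≤ bInv n ((w * v : W n) : Perm') :=
    fun v hv => by rw [← len_eq_bInv, ← len_eq_bInv]; exact hw v hv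
  refine ⟨fun a ha => ?_, fun i _ => ?_⟩
  · obtain ⟨h1, h2⟩ := Finset.mem_Icc.1 ha
    by_contra! hneg
    have hlt := bInv_mul_flipAt_lt h1 h2 w (hneg.lt_of_ne (W.apply_ne_zero w (by omega)))
    exact hlt.not_ge (hmin _ (flipAt_mem_Wyoung_absList h1 h2))
  · rw [blk, Finset.coe_Icc]
    refine strictMonoOn_of_lt_add_one Set.ordConnected_Icc fun c _ hc hc1 => ?_
    have hcb : c ∈ blk p i := Finset.mem_Icc.2 hc
    have hc1b : c + 1 ∈ blk p i := Finset.mem_Icc.2 hc1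
    have h1 : 1 ≤ c := pos_of_mem_blk hcb
    have h2 : c + 1 ≤ n := (Finset.mem_Icc.1 (blk_subset_Icc hp i hc1b)).2
    by_contra! hle
    have hlt := hle.lt_of_ne ((w : Perm').injective.ne (by omega))
    have := bInv_mul_swapAt h1 h2 w
    rw [if_pos hlt, if_neg hlt.not_gt] at this
    have := hmin _ (swapAt_mem_Wyoung_absList h1 h2 hcb hc1b)
    omega

lemma W.abs_mul_apply_abs_inv (w v : W n) (y : ℤ) :
    |((w * v : W n) : Perm') (|((v⁻¹ : W n) : Perm') y|)| = |(w : Perm') y| := by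
  rw [Subgroup.coe_mul, Equiv.Perm.mul_apply, ← W.abs_apply_abs w, W.abs_apply_abs v,
    Subgroup.coe_inv, Equiv.Perm.inv_def, Equiv.apply_symm_apply, W.abs_apply_abs]

/-- An inversion `i < j` of `w` lies in two different blocks, which `|v⁻¹ ·|` preserves. -/
lemma abs_inv_lt_of_inversion (hp : IsSignedComposition n p) {w : W n} (hw : IncOnBlocks n p w)
    {v : W n} (hv : v ∈ Wyoung n (absList p)) {i j : ℤ} (hi : i ∈ Finset.Icc (1 : ℤ) n)
    (hj : j ∈ Finset.Icc (1 : ℤ) n) (hij : i < j) (hwij : (w : Perm') j < (w : Perm') i) :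
    (|((v⁻¹ : W n) : Perm') i|, |((v⁻¹ : W n) : Perm') j|) ∈
        Finset.Icc (1 : ℤ) n ×ˢ Finset.Icc (1 : ℤ) n ∧
      |((v⁻¹ : W n) : Perm') i| < |((v⁻¹ : W n) : Perm') j| := by
  have hσblk := mem_Wyoung_absList_iff.1 (inv_mem_Wyoung_absList hv)
  obtain ⟨bi, hbi, hib⟩ := exists_mem_blk hp hi
  obtain ⟨bj, hbj, hjb⟩ := exists_mem_blk hp hj
  have hb : bi < bj := by
    rcases lt_trichotomy bi bj with h | rfl | h
    · exact h
    · exact absurd (hw.2 bi hbi hib hjb hij) hwij.not_gt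
    · exact absurd (lt_of_mem_blk_of_mem_blk h hjb hib) hij.not_gt
  have hσi : |((v⁻¹ : W n) : Perm') i| ∈ blk p bi := hσblk bi hbi hib
  have hσj : |((v⁻¹ : W n) : Perm') j| ∈ blk p bj := hσblk bj hbj hjb
  exact ⟨Finset.mem_product.2 ⟨blk_subset_Icc hp bi hσi, blk_subset_Icc hp bj hσj⟩,
    lt_of_mem_blk_of_mem_blk hb hσi hσj⟩

/-- `w` has no pair with negative sum, and its inversions inject into the type-B inversions of
`w v` via `y ↦ |v⁻¹ y|`. -/
lemma bInv_le_bInv_mul (hp : IsSignedComposition n p) {w : W n} (hw : IncOnBlocks n p w)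
    {v : W n} (hv : v ∈ Wyoung n (absList p)) :
    bInv n (w : Perm') ≤ bInv n ((w * v : W n) : Perm') := by
  classical
  set u := w * v
  set σ : ℤ → ℤ := fun y => |((v⁻¹ : W n) : Perm') y|
  have hnoNeg : ((Finset.Icc (1 : ℤ) n ×ˢ Finset.Icc (1 : ℤ) n).filter
      fun x => x.1 ≤ x.2 ∧ (w : Perm') x.2 < -(w : Perm') x.1) = ∅ :=
    Finset.filter_false_of_mem fun x hx => by
      obtain ⟨h1, h2⟩ := Finset.mem_product.1 hx
      have := hw.1 _ h1
      have := hw.1 _ h2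
      omega
  rw [bInv_eq_card, bInv_eq_card, hnoNeg, Finset.card_empty, add_zero]
  refine (Finset.card_le_card_of_injOn (fun x => (σ x.1, σ x.2)) ?_ ?_).trans
    (Finset.card_union_le _ _)
  · rintro ⟨i, j⟩ hx
    simp only [Finset.coe_filter, Finset.mem_product, Set.mem_ofPred_eq] at hx
    obtain ⟨⟨hi, hj⟩, hij, hwij⟩ := hx
    obtain ⟨hmem, hlt⟩ := abs_inv_lt_of_inversion hp hw hv hi hj hij hwij
    have habs : |(u : Perm') (σ j)| < |(u : Perm') (σ i)| := by
      rw [W.abs_mul_apply_abs_inv, W.abs_mul_apply_abs_inv, abs_of_pos (hw.1 _ hi),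
        abs_of_pos (hw.1 _ hj)]
      exact hwij
    simp only [Finset.coe_union, Finset.coe_filter, Set.mem_union, Set.mem_ofPred_eq]
    exact (lt_or_lt_neg_of_abs_lt habs).imp (fun h => ⟨hmem, hlt, h⟩) (fun h => ⟨hmem, hlt.le, h⟩)
  · intro x hx y hy hxy
    simp only [Finset.coe_filter, Finset.mem_product, Finset.mem_Icc, Set.mem_ofPred_eq] at hx hy
    simp only [Prod.mk.injEq] at hxy
    have hσinj : Set.InjOn σ (Set.Ioi 0) := W.injOn_abs_apply v⁻¹
    exact Prod.ext (hσinj (Set.mem_Ioi.2 (by omega)) (Set.mem_Ioi.2 (by omega)) hxy.1)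
      (hσinj (Set.mem_Ioi.2 (by omega)) (Set.mem_Ioi.2 (by omega)) hxy.2)

lemma mem_Xmin_absList_iff (hp : IsSignedComposition n p) (w : W n) :
    w ∈ Xmin n (absList p) ↔ IncOnBlocks n p w :=
  ⟨incOnBlocks_of_mem_Xmin hp, fun hw v hv => by
    rw [len_eq_bInv, len_eq_bInv]
    exact bInv_le_bInv_mul hp hw hv⟩

end cosets

/-! ### Ordered set partitions -/

lemma mem_foldr_union {J : List (Finset ℤ)} {x : ℤ} :
    x ∈ J.foldr (· ∪ ·) ∅ ↔ ∃ A ∈ J, x ∈ A := by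
  induction J with
  | nil => simp
  | cons A J ih => simp [ih]

lemma sort_Icc (u v : ℤ) :
    (Finset.Icc u v).sort (· ≤ ·) = (List.range (v + 1 - u).toNat).map fun t : ℕ => u + t := by
  have hnd : ((List.range (v + 1 - u).toNat).map fun t : ℕ => u + t).Nodup :=
    List.nodup_range.map fun s t h => by simpa using h
  have hset : ((List.range (v + 1 - u).toNat).map fun t : ℕ => u + t).toFinset =
      Finset.Icc u v := by
    ext x
    simp only [List.mem_toFinset, List.mem_map, List.mem_range, Finset.mem_Icc]
    exact ⟨by rintro ⟨t, ht, rfl⟩; omega, fun h => ⟨(x - u).toNat, by omega, by omega⟩⟩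
  rw [← hset, List.toFinset_sort _ hnd]
  exact List.pairwise_map.2 (List.pairwise_lt_range.imp fun h => by omega)

section osp

variable {n : ℕ} {p : List ℤ} {J : List (Finset ℤ)} {i : ℕ} {a : ℤ}

abbrev blkIdx (p : List ℤ) (i : ℕ) (a : ℤ) : ℕ := (a - (phat p i : ℤ) - 1).toNat

lemma blkIdx_lt (hi : i < p.length) (ha : a ∈ blk p i) : blkIdx p i a < (p.getD i 0).natAbs := by
  rw [blk, Finset.mem_Icc] at ha
  have := phat_succ hi
  unfold blkIdx
  omega

lemma getD_sort_blk (hi : i < p.length) (ha : a ∈ blk p i) :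
    ((blk p i).sort (· ≤ ·)).getD (blkIdx p i a) 0 = a := by
  have hlt := blkIdx_lt hi ha
  rw [blk, Finset.mem_Icc] at ha
  have := phat_succ hi
  unfold blkIdx at hlt ⊢
  rw [blk, sort_Icc, List.getD_eq_getElem _ _ (by rw [List.length_map, List.length_range]; omega),
    List.getElem_map, List.getElem_range]
  omega

lemma ospFun_of_mem_blk (J : List (Finset ℤ)) (hi : i < p.length) (ha : a ∈ blk p i) :
    ospFun p J a = ((J.getD i ∅).sort (· ≤ ·)).getD (blkIdx p i a) 0 := by
  have hfind : (List.range p.length).find?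
      (fun j => decide ((phat p j : ℤ) < a ∧ a ≤ (phat p (j + 1) : ℤ))) = some i := by
    rw [blk, Finset.mem_Icc] at ha
    refine List.find?_range_eq_some.2
      ⟨by simp only [decide_eq_true_eq]; omega, List.mem_range.2 hi, fun j hj => ?_⟩
    have : phat p (j + 1) ≤ phat p i := phat_mono p hj
    simp only [Bool.not_eq_true', decide_eq_false_iff_not]
    omega
  rw [ospFun, oddify_of_pos _ (pos_of_mem_blk ha), hfind]

lemma ospFun_of_lt (hp : IsSignedComposition n p) (J : List (Finset ℤ)) (ha : (n : ℤ) < a) :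
    ospFun p J a = a := by
  have hfind : (List.range p.length).find?
      (fun j => decide ((phat p j : ℤ) < a ∧ a ≤ (phat p (j + 1) : ℤ))) = none := by
    refine List.find?_eq_none.2 fun j _ => ?_
    have := phat_le hp (j + 1)
    simp only [decide_eq_true_eq]
    omega
  rw [ospFun, oddify_of_pos _ (by omega), hfind]

lemma getD_subset_Icc_of_isOSP (hJ : IsOSP n p J) (hi : i < p.length) :
    J.getD i ∅ ⊆ Finset.Icc (1 : ℤ) n := fun x hx => by
  have hi' : i < J.length := hJ.1 ▸ hi
  rw [← hJ.2.2.2, mem_foldr_union]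
  exact ⟨_, by rw [List.getD_eq_getElem _ _ hi']; exact List.getElem_mem hi', hx⟩

lemma ospFun_mem (hJ : IsOSP n p J) (hi : i < p.length) (ha : a ∈ blk p i) :
    ospFun p J a ∈ J.getD i ∅ := by
  have hlen : blkIdx p i a < ((J.getD i ∅).sort (· ≤ ·)).length := by
    rw [Finset.length_sort, hJ.2.1 i hi]
    exact blkIdx_lt hi ha
  rw [ospFun_of_mem_blk J hi ha, List.getD_eq_getElem _ _ hlen, ← Finset.mem_sort (· ≤ ·)]
  exact List.getElem_mem hlen

lemma strictMonoOn_ospFun (hJ : IsOSP n p J) (hi : i < p.length) :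
    StrictMonoOn (ospFun p J) (blk p i) := by
  intro a ha b hb hab
  have hlen : ∀ c ∈ blk p i, blkIdx p i c < ((J.getD i ∅).sort (· ≤ ·)).length := fun c hc => by
    rw [Finset.length_sort, hJ.2.1 i hi]
    exact blkIdx_lt hi hc
  rw [ospFun_of_mem_blk J hi ha, ospFun_of_mem_blk J hi hb,
    List.getD_eq_getElem _ _ (hlen a ha), List.getD_eq_getElem _ _ (hlen b hb)]
  refine List.pairwise_iff_getElem.1 (List.sortedLT_iff_pairwise.1 (Finset.sortedLT_sort _))
    _ _ _ _ ?_
  have := pos_of_mem_blk (Finset.mem_coe.1 ha)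
  rw [Finset.mem_coe, blk, Finset.mem_Icc] at ha hb
  unfold blkIdx
  omega

lemma image_ospFun_blk (hJ : IsOSP n p J) (hi : i < p.length) :
    (blk p i).image (ospFun p J) = J.getD i ∅ :=
  Finset.eq_of_subset_of_card_le
    (Finset.image_subset_iff.2 fun _ ha => ospFun_mem hJ hi ha)
    (by rw [hJ.2.1 i hi, Finset.card_image_of_injOn (strictMonoOn_ospFun hJ hi).injOn,
      card_blk hi])

lemma bijOn_Ioi_of_bijOn_Icc {g : ℤ → ℤ}
    (hg : Set.BijOn g (Finset.Icc (1 : ℤ) n) (Finset.Icc (1 : ℤ) n))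
    (hfix : ∀ a, (n : ℤ) < a → g a = a) : Set.BijOn g (Set.Ioi 0) (Set.Ioi 0) := by
  have hIcc : ∀ a : ℤ, 0 < a → a ≤ n → a ∈ (Finset.Icc (1 : ℤ) n : Set ℤ) := fun a h1 h2 =>
    Finset.mem_coe.2 (Finset.mem_Icc.2 ⟨h1, h2⟩)
  have hsmall : ∀ a : ℤ, 0 < a → a ≤ n → 1 ≤ g a ∧ g a ≤ n := fun a h1 h2 =>
    Finset.mem_Icc.1 (hg.mapsTo (hIcc a h1 h2))
  refine ⟨fun a ha => ?_, fun a ha b hb hab => ?_, fun y hy => ?_⟩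
  · rw [Set.mem_Ioi] at ha ⊢
    by_cases h : a ≤ n
    · linarith [hsmall a ha h]
    · rwa [hfix a (by omega)]
  · rw [Set.mem_Ioi] at ha hb
    by_cases h1 : a ≤ n <;> by_cases h2 : b ≤ n
    · exact hg.injOn (hIcc a ha h1) (hIcc b hb h2) hab
    · have := hsmall a ha h1
      rw [hab, hfix b (by omega)] at this
      omega
    · have := hsmall b hb h2
      rw [← hab, hfix a (by omega)] at this
      omega
    · rwa [hfix a (by omega), hfix b (by omega)] at hab
  · rw [Set.mem_Ioi] at hy
    by_cases h : y ≤ n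
    · obtain ⟨a, ha, rfl⟩ := hg.surjOn (hIcc y hy h)
      exact ⟨a, (Finset.mem_Icc.1 ha).1, rfl⟩
    · exact ⟨y, hy, hfix y (by omega)⟩

lemma bijOn_ospFun (hp : IsSignedComposition n p) (hJ : IsOSP n p J) :
    Set.BijOn (ospFun p J) (Set.Ioi 0) (Set.Ioi 0) := by
  have hmaps : Set.MapsTo (ospFun p J) (Finset.Icc (1 : ℤ) n) (Finset.Icc (1 : ℤ) n) :=
    fun a ha => by
      obtain ⟨i, hi, hai⟩ := exists_mem_blk hp ha
      exact getD_subset_Icc_of_isOSP hJ hi (ospFun_mem hJ hi hai)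
  -- different blocks go to the disjoint parts `J_i`, and `ospFun` is monotone on each block
  have hinj : Set.InjOn (ospFun p J) (Finset.Icc (1 : ℤ) n) := fun a ha b hb hab => by
    obtain ⟨i, hi, hai⟩ := exists_mem_blk hp ha
    obtain ⟨j, hj, hbj⟩ := exists_mem_blk hp hb
    by_cases hij : i = j
    · subst hij
      exact (strictMonoOn_ospFun hJ hi).injOn hai hbj hab
    · have := ospFun_mem hJ hj hbj
      rw [← hab] at this
      exact absurd this (Finset.disjoint_left.1 (hJ.2.2.1 i hi j hj hij) (ospFun_mem hJ hi hai))
  exact bijOn_Ioi_of_bijOn_Icc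
    ⟨hmaps, hinj, Finset.surjOn_of_injOn_of_card_le _ hmaps hinj le_rfl⟩
    fun a ha => ospFun_of_lt hp J ha

lemma coe_wOSP (hp : IsSignedComposition n p) (hJ : IsOSP n p J) :
    ⇑((wOSP n p J : W n) : Perm') = ospFun p J := by
  have hodd : ∀ a, ospFun p J (-a) = -ospFun p J a := oddify_neg _
  have hcoe : ⇑(permOfFun (ospFun p J)) = ospFun p J :=
    permOfFun_coe (Equiv.ofBijective _ (bijective_of_odd hodd (bijOn_ospFun hp hJ))) rfl
  have hmem : permOfFun (ospFun p J) ∈ W n := by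
    refine ⟨fun a => by rw [hcoe, hodd], fun a ha => ?_⟩
    rw [hcoe]
    rcases abs_cases a with ⟨h, -⟩ | ⟨h, -⟩
    · exact ospFun_of_lt hp J (h ▸ ha)
    · rw [← neg_neg a, hodd, ospFun_of_lt hp J (h ▸ ha)]
  rw [wOSP, toW_coe hmem, hcoe]

lemma incOnBlocks_wOSP (hp : IsSignedComposition n p) (hJ : IsOSP n p J) :
    IncOnBlocks n p (wOSP n p J) := by
  rw [IncOnBlocks, coe_wOSP hp hJ]
  refine ⟨fun a ha => ?_, fun i hi => strictMonoOn_ospFun hJ hi⟩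
  obtain ⟨i, hi, hai⟩ := exists_mem_blk hp ha
  exact (Finset.mem_Icc.1 (getD_subset_Icc_of_isOSP hJ hi (ospFun_mem hJ hi hai))).1

end osp

def blockImages {n : ℕ} (p : List ℤ) (w : W n) : List (Finset ℤ) :=
  (List.range p.length).map fun i => (blk p i).image (w : Perm')

section bijection

variable {n : ℕ} {p : List ℤ}

lemma getD_blockImages (w : W n) {i : ℕ} (hi : i < p.length) :
    (blockImages p w).getD i ∅ = (blk p i).image (w : Perm') := by
  rw [List.getD_eq_getElem _ _ (by simpa [blockImages] using hi)]
  simp [blockImages]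

lemma image_Icc_of_pos {w : W n} (hw : ∀ a ∈ Finset.Icc (1 : ℤ) n, 0 < (w : Perm') a) :
    (Finset.Icc (1 : ℤ) n).image (w : Perm') = Finset.Icc (1 : ℤ) n :=
  Finset.eq_of_subset_of_card_le
    (Finset.image_subset_iff.2 fun a ha => by
      obtain ⟨h1, h2⟩ := Finset.mem_Icc.1 ha
      exact W.apply_mem_Icc w h1 h2 (hw a ha))
    (Finset.card_image_of_injective _ (w : Perm').injective).ge

lemma isOSP_blockImages (hp : IsSignedComposition n p) {w : W n} (hw : IncOnBlocks n p w) :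
    IsOSP n p (blockImages p w) := by
  refine ⟨by simp [blockImages], fun i hi => ?_, fun i hi j hj hij => ?_, ?_⟩
  · rw [getD_blockImages w hi, Finset.card_image_of_injective _ (w : Perm').injective,
      card_blk hi]
  · rw [getD_blockImages w hi, getD_blockImages w hj,
      Finset.disjoint_image (w : Perm').injective]
    exact Finset.disjoint_left.2 fun a ha hb => hij (eq_of_mem_blk_of_mem_blk ha hb)
  · ext x
    rw [mem_foldr_union, ← image_Icc_of_pos hw.1, Finset.mem_image]
    constructor
    · rintro ⟨A, hA, hx⟩
      obtain ⟨i, -, rfl⟩ := List.mem_map.1 hA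
      obtain ⟨a, ha, rfl⟩ := Finset.mem_image.1 hx
      exact ⟨a, blk_subset_Icc hp i ha, rfl⟩
    · rintro ⟨a, ha, rfl⟩
      obtain ⟨i, hi, hai⟩ := exists_mem_blk hp ha
      exact ⟨_, List.mem_map.2 ⟨i, List.mem_range.2 hi, rfl⟩, Finset.mem_image_of_mem _ hai⟩

lemma wOSP_blockImages (hp : IsSignedComposition n p) {w : W n} (hw : IncOnBlocks n p w) :
    wOSP n p (blockImages p w) = w := by
  refine W.ext_of_pos fun a ha => ?_
  rw [coe_wOSP hp (isOSP_blockImages hp hw)]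
  by_cases han : a ≤ n
  · obtain ⟨i, hi, hai⟩ := exists_mem_blk hp (Finset.mem_Icc.2 ⟨ha, han⟩)
    -- `w` is increasing on `P_i`, so sorting `w(P_i)` is applying `w` to the sorted `P_i`
    rw [ospFun_of_mem_blk _ hi hai, getD_blockImages w hi,
      show (blk p i).image (w : Perm') = (blk p i).map (w : Perm').toEmbedding by
        rw [Finset.map_eq_image, Equiv.coe_toEmbedding],
      ← (hw.2 i hi).map_finsetSort, Equiv.coe_toEmbedding, ← W.apply_zero w, List.getD_map,
      getD_sort_blk hi hai]
  · rw [ospFun_of_lt hp _ (by omega), W.apply_of_lt_abs w (by rw [abs_of_pos ha]; omega)]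

lemma blockImages_wOSP (hp : IsSignedComposition n p) {J : List (Finset ℤ)} (hJ : IsOSP n p J) :
    blockImages p (wOSP n p J) = J := by
  refine List.ext_getElem (by simp [blockImages, hJ.1]) fun i h1 h2 => ?_
  have hi : i < p.length := by simpa [blockImages] using h1
  rw [← List.getD_eq_getElem _ ∅ h1, ← List.getD_eq_getElem _ ∅ h2, getD_blockImages _ hi,
    coe_wOSP hp hJ, image_ospFun_blk hJ hi]

lemma injOn_wOSP (hp : IsSignedComposition n p) : Set.InjOn (wOSP n p) {J | IsOSP n p J} :=
  fun J hJ J' hJ' h => by rw [← blockImages_wOSP hp hJ, h, blockImages_wOSP hp hJ']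

lemma Xmin_absList_eq_image (hp : IsSignedComposition n p) :
    Xmin n (absList p) = wOSP n p '' {J | IsOSP n p J} := by
  ext w
  rw [mem_Xmin_absList_iff hp]
  exact ⟨fun hw => ⟨_, isOSP_blockImages hp hw, wOSP_blockImages hp hw⟩,
    by rintro ⟨J, hJ, rfl⟩; exact incOnBlocks_wOSP hp hJ⟩

end bijection

theorem stmt2_general (n : ℕ) (p : List ℤ) (hp : IsSignedComposition n p) :
    eP n p =
      ∑ᶠ J ∈ {J : List (Finset ℤ) | IsOSP n p J},
        MonoidAlgebra.single (wOSP n p J) (1 : ℂ) *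
          ((List.range p.length).map (fun i =>
            epsP n (blk p i) (decide (0 < p.getD i 0)) * reutP n (blk p i))).prod := by
  have hfin : {J | IsOSP n p J}.Finite :=
    Set.Finite.of_finite_image (Set.toFinite _) (injOn_wOSP hp)
  rw [eP, xp, Xmin_absList_eq_image hp, finsum_mem_image (injOn_wOSP hp),
    finsum_mem_mul' _ _ hfin]

/-- Vazirani's element
`I_p = Σ_{(J_1,…,J_k)} w_{(J_1,…,J_k)} ε_{P_1}^{ξ_1} r_{P_1} ⋯ ε_{P_k}^{ξ_k} r_{P_k}`
(the sum over ordered set partitions of `[n]` with `|J_i| = |p_i|`) equals `e_p`. -/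
theorem stmt2 (n : ℕ) (hn : 0 < n) (p : List ℤ) (hp : IsSignedComposition n p) :
    eP n p =
      ∑ᶠ J ∈ {J : List (Finset ℤ) | IsOSP n p J},
        MonoidAlgebra.single (wOSP n p J) (1 : ℂ) *
          ((List.range p.length).map (fun i =>
            epsP n (blk p i) (decide (0 < p.getD i 0)) * reutP n (blk p i))).prod :=
  stmt2_general n p hp

end HypOct
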